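/- arXiv:2010.10927 — 12 statements merged into one kernel-verified Lean document; each statement's English description precedes it below -/
import Mathlib

section
/- Let V be a real vector space, A ⊆ V an affine subset (i.e. λ·x + (1-λ)·y ∈ A for all x, y ∈ A and λ ∈ ℝ), F ⊆ A a convex subset and N ⊆ A a convex subset. Then the robustness function R_{F,N} is convex on A: for all x₁, x₂ ∈ A and λ ∈ [0,1], R_{F,N}(λ·x₁ + (1-λ)·x₂) ≤ λ·R_{F,N}(x₁) + (1-λ)·R_{F,N}(x₂), the inequality being in [0,∞]. -/
open scoped ENNReal NNReal

/-- The robustness `R_{F,N}(x)`: the infimum of those `r ≥ 0` such that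
`(1/(1+r)) • (x + r • y) ∈ F` for some `y ∈ N`, with `inf ∅ = ∞`. -/
noncomputable def Rob {V : Type*} [AddCommGroup V] [Module ℝ V]
    (F N : Set V) (x : V) : ℝ≥0∞ :=
  ⨅ r ∈ {r : ℝ≥0 | ∃ y ∈ N, (1 + (r : ℝ))⁻¹ • (x + (r : ℝ) • y) ∈ F}, (r : ℝ≥0∞)

/-! Clearing the inverse, `r` is feasible for `x` when `x + r • y = (1 + r) • f` with `y ∈ N` and
`f ∈ F`. In this form feasibility is stable under convex combinations `a (x₁, r₁) + b (x₂, r₂)`: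
the new `y` and `f` are the combinations of the old ones with weights `a r₁, b r₂` and
`a (1 + r₁), b (1 + r₂)`, which exist by convexity of `N` and `F`. Taking infima over the
feasible radii gives the convexity of `Rob`. -/

theorem biInf_coe_le_mul_biInf_add_mul_biInf {S S₁ S₂ : Set ℝ≥0} {a b : ℝ≥0}
    (ha : a ≠ 0) (hb : b ≠ 0) (h : ∀ r₁ ∈ S₁, ∀ r₂ ∈ S₂, a * r₁ + b * r₂ ∈ S) :
    ⨅ r ∈ S, (r : ℝ≥0∞) ≤
      a * (⨅ r ∈ S₁, (r : ℝ≥0∞)) + b * ⨅ r ∈ S₂, (r : ℝ≥0∞) := by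
  simp_rw [iInf_subtype', ENNReal.mul_iInf_of_ne (ENNReal.coe_ne_zero.2 ha) ENNReal.coe_ne_top,
    ENNReal.mul_iInf_of_ne (ENNReal.coe_ne_zero.2 hb) ENNReal.coe_ne_top, ENNReal.iInf_add,
    ENNReal.add_iInf]
  refine le_iInf₂ fun r₁ r₂ => ?_
  exact (iInf_le _ ⟨_, h r₁ r₁.2 r₂ r₂.2⟩).trans_eq (by push_cast; rfl)

section Robustness

variable {V : Type*} [AddCommGroup V] [Module ℝ V] {F N : Set V}

variable (F N) in
def robRadii (x : V) : Set ℝ≥0 :=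
  {r : ℝ≥0 | ∃ y ∈ N, (1 + (r : ℝ))⁻¹ • (x + (r : ℝ) • y) ∈ F}

theorem rob_eq_biInf_robRadii (x : V) : Rob F N x = ⨅ r ∈ robRadii F N x, (r : ℝ≥0∞) := rfl

theorem mem_robRadii_iff {x : V} {r : ℝ≥0} :
    r ∈ robRadii F N x ↔ ∃ y ∈ N, ∃ f ∈ F, x + (r : ℝ) • y = (1 + (r : ℝ)) • f := by
  have h : 1 + (r : ℝ) ≠ 0 := by positivity
  constructor
  · rintro ⟨y, hy, hv⟩
    exact ⟨y, hy, _, hv, (smul_inv_smul₀ h _).symm⟩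
  · rintro ⟨y, hy, f, hf, hv⟩
    exact ⟨y, hy, by rwa [hv, inv_smul_smul₀ h]⟩

theorem exists_add_smul_eq_one_add_smul_of_convex (hF : Convex ℝ F) (hN : Convex ℝ N)
    {a b r₁ r₂ : ℝ} (ha : 0 ≤ a) (hb : 0 ≤ b) (hab : a + b = 1) (hr₁ : 0 ≤ r₁) (hr₂ : 0 ≤ r₂)
    {x₁ x₂ y₁ y₂ f₁ f₂ : V} (hy₁ : y₁ ∈ N) (hy₂ : y₂ ∈ N) (hf₁ : f₁ ∈ F) (hf₂ : f₂ ∈ F)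
    (h₁ : x₁ + r₁ • y₁ = (1 + r₁) • f₁) (h₂ : x₂ + r₂ • y₂ = (1 + r₂) • f₂) :
    ∃ y ∈ N, ∃ f ∈ F,
      (a • x₁ + b • x₂) + (a * r₁ + b * r₂) • y = (1 + (a * r₁ + b * r₂)) • f := by
  obtain ⟨y, hy, hy_eq⟩ :=
    hN.exists_mem_add_smul_eq hy₁ hy₂ (mul_nonneg ha hr₁) (mul_nonneg hb hr₂)
  obtain ⟨f, hf, hf_eq⟩ :=
    hF.exists_mem_add_smul_eq hf₁ hf₂ (p := a * (1 + r₁)) (q := b * (1 + r₂))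
      (by positivity) (by positivity)
  have hweights : 1 + (a * r₁ + b * r₂) = a * (1 + r₁) + b * (1 + r₂) := by
    linear_combination -hab
  refine ⟨y, hy, f, hf, ?_⟩
  rw [hweights, hf_eq, hy_eq]
  linear_combination (norm := module) a • h₁ + b • h₂

theorem add_mem_robRadii_of_convex (hF : Convex ℝ F) (hN : Convex ℝ N) {a b : ℝ≥0}
    (hab : a + b = 1) {x₁ x₂ : V} {r₁ r₂ : ℝ≥0} (h₁ : r₁ ∈ robRadii F N x₁)
    (h₂ : r₂ ∈ robRadii F N x₂) :
    a * r₁ + b * r₂ ∈ robRadii F N ((a : ℝ) • x₁ + (b : ℝ) • x₂) := by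
  obtain ⟨y₁, hy₁, f₁, hf₁, hx₁⟩ := mem_robRadii_iff.1 h₁
  obtain ⟨y₂, hy₂, f₂, hf₂, hx₂⟩ := mem_robRadii_iff.1 h₂
  rw [mem_robRadii_iff, NNReal.coe_add, NNReal.coe_mul, NNReal.coe_mul]
  exact exists_add_smul_eq_one_add_smul_of_convex hF hN a.coe_nonneg b.coe_nonneg
    (mod_cast hab) r₁.coe_nonneg r₂.coe_nonneg hy₁ hy₂ hf₁ hf₂ hx₁ hx₂

end Robustness

theorem rob_convex_general {V : Type*} [AddCommGroup V] [Module ℝ V] (F N : Set V)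
    (hF : Convex ℝ F) (hN : Convex ℝ N) (x₁ x₂ : V) (l : ℝ) (hl0 : 0 ≤ l) (hl1 : l ≤ 1) :
    Rob F N (l • x₁ + (1 - l) • x₂) ≤
      ENNReal.ofReal l * Rob F N x₁ + ENNReal.ofReal (1 - l) * Rob F N x₂ := by
  rcases hl0.eq_or_lt with rfl | hl0
  · simp
  rcases hl1.eq_or_lt with rfl | hl1
  · simp
  have hsum : l.toNNReal + (1 - l).toNNReal = 1 := by
    rw [← Real.toNNReal_add hl0.le (by linarith), add_sub_cancel, Real.toNNReal_one]
  simp only [rob_eq_biInf_robRadii]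
  refine biInf_coe_le_mul_biInf_add_mul_biInf (by simpa) (by simpa) fun r₁ h₁ r₂ h₂ => ?_
  have h := add_mem_robRadii_of_convex hF hN hsum h₁ h₂
  rwa [Real.coe_toNNReal _ hl0.le, Real.coe_toNNReal _ (by linarith)] at h

/-- Convexity of the robustness function on an affine subset `A`. -/
theorem rob_convex {V : Type*} [AddCommGroup V] [Module ℝ V] (A F N : Set V)
    (hA : ∀ x ∈ A, ∀ y ∈ A, ∀ l : ℝ, l • x + (1 - l) • y ∈ A)
    (hFA : F ⊆ A) (hF : Convex ℝ F) (hNA : N ⊆ A) (hN : Convex ℝ N)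
    (x₁ x₂ : V) (hx₁ : x₁ ∈ A) (hx₂ : x₂ ∈ A)
    (l : ℝ) (hl0 : 0 ≤ l) (hl1 : l ≤ 1) :
    Rob F N (l • x₁ + (1 - l) • x₂) ≤
      ENNReal.ofReal l * Rob F N x₁ + ENNReal.ofReal (1 - l) * Rob F N x₂ :=
  rob_convex_general F N hF hN x₁ x₂ l hl0 hl1
end

section
/- Let V be a Hausdorff real topological vector space, A ⊆ V a closed affine subset, F ⊆ A a closed convex subset, and N ⊆ A a nonempty subset whose closure is compact. Then the robustness R_{F,N} is faithful with respect to F: for every x ∈ A, R_{F,N}(x) = 0 if and only if x ∈ F. -/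
/-!
If `R_{F,N}(x) = 0`, there are points `(x + r y)/(1 + r) ∈ F` with `r → 0` and `y ∈ N`. Since
the closure of `N` is compact, the `y` cluster at some `y₀`, so these points cluster at `x`, and
`x ∈ F` because `F` is closed. Conversely, `r = 0` is admissible as soon as `x ∈ F`.
-/

open scoped ENNReal NNReal

open Filter Topology Set

theorem exists_mem_of_frequently_nhds_prod_principal {X Y Z : Type*} [TopologicalSpace X]
    [TopologicalSpace Y] [TopologicalSpace Z] {K : Set Y} {F : Set Z} {g : X × Y → Z} {x : X}
    (hK : IsCompact K) (hF : IsClosed F) (hg : ∀ y ∈ K, ContinuousAt g (x, y))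
    (h : ∃ᶠ p in 𝓝 x ×ˢ 𝓟 K, g p ∈ F) : ∃ y ∈ K, g (x, y) ∈ F := by
  -- compactness of `K` splits `𝓝 x ×ˢ 𝓝ˢ K` into the supremum of the filters `𝓝 (x, y)`, `y ∈ K`
  have h' : ∃ᶠ p in ⨆ y : K, 𝓝 (x, (y : Y)), g p ∈ F := by
    simpa only [hK.prod_nhdsSet_eq_biSup, nhds_prod_eq, iSup_subtype'] using
      h.filter_mono (prod_mono_right _ principal_le_nhdsSet)
  obtain ⟨⟨y, hyK⟩, hy⟩ := frequently_iSup.1 h'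
  exact ⟨y, hyK, hF.closure_subset (mem_closure_of_frequently_of_tendsto hy (hg y hyK))⟩

section Robustness

variable {V : Type*} [AddCommGroup V] [Module ℝ V]

noncomputable def robMix (x : V) (p : ℝ≥0 × V) : V :=
  (1 + (p.1 : ℝ))⁻¹ • (x + (p.1 : ℝ) • p.2)

theorem continuous_robMix [TopologicalSpace V] [ContinuousAdd V] [ContinuousSMul ℝ V] (x : V) :
    Continuous (robMix x) := by
  have hpos : ∀ p : ℝ≥0 × V, 1 + (p.1 : ℝ) ≠ 0 := fun p => by positivity
  unfold robMix
  fun_prop (disch := exact hpos _)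

theorem rob_eq_zero_iff_frequently {F N : Set V} {x : V} :
    Rob F N x = 0 ↔ ∃ᶠ p in 𝓝 0 ×ˢ 𝓟 N, robMix x p ∈ F := by
  simp only [(NNReal.nhds_zero_basis.prod_principal N).frequently_iff]
  constructor
  · intro h ε hε
    have hlt : Rob F N x < ε := h ▸ ENNReal.coe_pos.2 hε
    simp only [Rob, iInf_lt_iff] at hlt
    obtain ⟨r, ⟨y, hy, hyF⟩, hr⟩ := hlt
    exact ⟨(r, y), ⟨ENNReal.coe_lt_coe.1 hr, hy⟩, hyF⟩
  · intro h
    refine le_antisymm (ENNReal.le_of_forall_pos_le_add fun ε hε _ => ?_) zero_le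
    obtain ⟨⟨r, y⟩, ⟨hr, hy⟩, hyF⟩ := h ε hε
    calc Rob F N x ≤ r := biInf_le _ ⟨y, hy, hyF⟩
      _ ≤ 0 + ε := by simpa using hr.le

end Robustness

theorem rob_faithful_general {V : Type*} [AddCommGroup V] [Module ℝ V] [TopologicalSpace V]
    [IsTopologicalAddGroup V] [ContinuousSMul ℝ V]
    (A F N : Set V)
    (hFc : IsClosed F)
    (hNne : N.Nonempty) (hNcomp : IsCompact (closure N)) :
    ∀ x ∈ A, (Rob F N x = 0 ↔ x ∈ F) := by
  intro x _
  rw [rob_eq_zero_iff_frequently]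
  constructor
  · intro h
    obtain ⟨y, -, hy⟩ := exists_mem_of_frequently_nhds_prod_principal hNcomp hFc
      (fun y _ => (continuous_robMix x).continuousAt)
      (h.filter_mono (prod_mono_right _ (principal_mono.2 subset_closure)))
    simpa [robMix] using hy
  · intro hx
    obtain ⟨y, hy⟩ := hNne
    exact (NNReal.nhds_zero_basis.prod_principal N).frequently_iff.2 fun ε hε =>
      ⟨(0, y), ⟨hε, hy⟩, by simpa [robMix]⟩

/-- Faithfulness of the robustness w.r.t. a closed convex free set `F`, when the
noise set `N` has compact closure. -/
theorem rob_faithful {V : Type*} [AddCommGroup V] [Module ℝ V] [TopologicalSpace V]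
    [IsTopologicalAddGroup V] [ContinuousSMul ℝ V] [T2Space V]
    (A F N : Set V)
    (hA : ∀ x ∈ A, ∀ y ∈ A, ∀ l : ℝ, l • x + (1 - l) • y ∈ A) (hAc : IsClosed A)
    (hFA : F ⊆ A) (hF : Convex ℝ F) (hFc : IsClosed F)
    (hNA : N ⊆ A) (hNne : N.Nonempty) (hNcomp : IsCompact (closure N)) :
    ∀ x ∈ A, (Rob F N x = 0 ↔ x ∈ F) :=
  rob_faithful_general A F N hFc hNne hNcomp
end

section
/- Let V be a Hausdorff real topological vector space, A ⊆ V a closed affine subset, F ⊆ A a closed convex subset, and N ⊆ A a compact subset. Then the robustness function R_{F,N} : A → [0,∞] is lower semicontinuous on A. -/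
open scoped ENNReal NNReal

theorem IsCompact.isClosed_setOf_exists_mem {X Y : Type*} [TopologicalSpace X]
    [TopologicalSpace Y] {K : Set X} (hK : IsCompact K) {s : Set (X × Y)} (hs : IsClosed s) :
    IsClosed {y | ∃ x ∈ K, (x, y) ∈ s} := by
  have : CompactSpace K := isCompact_iff_compactSpace.mp hK
  have himage : {y | ∃ x ∈ K, (x, y) ∈ s} =
      Prod.snd '' ((fun p : K × Y => ((p.1 : X), p.2)) ⁻¹' s) := by
    ext y
    simp
  rw [himage]
  exact isClosedMap_snd_of_compactSpace _ (hs.preimage (by fun_prop))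

section Robustness

variable {V : Type*} [AddCommGroup V] [Module ℝ V] {F N : Set V} {b : ℝ≥0} {x : V}

def robLE (F N : Set V) (b : ℝ≥0) : Set V :=
  {x | ∃ r ≤ b, ∃ y ∈ N, (1 + (r : ℝ))⁻¹ • (x + (r : ℝ) • y) ∈ F}

theorem rob_le_of_mem_robLE (hx : x ∈ robLE F N b) : Rob F N x ≤ b := by
  obtain ⟨r, hrb, y, hy, hxy⟩ := hx
  exact (iInf₂_le r ⟨y, hy, hxy⟩).trans (ENNReal.coe_le_coe.mpr hrb)

theorem mem_robLE_of_rob_lt (hx : Rob F N x < b) : x ∈ robLE F N b := by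
  simp only [Rob, iInf_lt_iff, exists_prop] at hx
  obtain ⟨r, ⟨y, hy, hxy⟩, hrb⟩ := hx
  exact ⟨r, (ENNReal.coe_lt_coe.mp hrb).le, y, hy, hxy⟩

theorem isClosed_robLE [TopologicalSpace V] [IsTopologicalAddGroup V] [ContinuousSMul ℝ V]
    (hF : IsClosed F) (hN : IsCompact N) (b : ℝ≥0) : IsClosed (robLE F N b) := by
  let g : (ℝ≥0 × V) × V → V := fun q => (1 + (q.1.1 : ℝ))⁻¹ • (q.2 + (q.1.1 : ℝ) • q.1.2)
  have hg : Continuous g :=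
    ((by fun_prop : Continuous fun q : (ℝ≥0 × V) × V => 1 + (q.1.1 : ℝ)).inv₀
      fun q => by positivity).smul (by fun_prop)
  have himage : robLE F N b = {x | ∃ p ∈ Set.Icc 0 b ×ˢ N, (p, x) ∈ g ⁻¹' F} := by
    ext x
    simp [robLE, g, and_assoc]
  rw [himage]
  exact (isCompact_Icc.prod hN).isClosed_setOf_exists_mem (hF.preimage hg)

theorem lowerSemicontinuous_rob [TopologicalSpace V] [IsTopologicalAddGroup V]
    [ContinuousSMul ℝ V] (hF : IsClosed F) (hN : IsCompact N) : LowerSemicontinuous (Rob F N) := by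
  intro x c hc
  obtain ⟨b, hcb, hbx⟩ := ENNReal.lt_iff_exists_nnreal_btwn.mp hc
  have hx : x ∉ robLE F N b := fun hx => (rob_le_of_mem_robLE hx).not_gt hbx
  filter_upwards [(isClosed_robLE hF hN b).isOpen_compl.mem_nhds hx] with z hz
  exact hcb.trans_le (not_lt.mp fun hzb => hz (mem_robLE_of_rob_lt hzb))

end Robustness

theorem rob_lowerSemicontinuous_general {V : Type*} [AddCommGroup V] [Module ℝ V]
    [TopologicalSpace V] [IsTopologicalAddGroup V] [ContinuousSMul ℝ V]
    (A F N : Set V)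
    (hFc : IsClosed F)
    (hNcomp : IsCompact N) :
    LowerSemicontinuousOn (fun x => Rob F N x) A :=
  (lowerSemicontinuous_rob hFc hNcomp).lowerSemicontinuousOn A

/-- Lower semicontinuity of the robustness on a closed affine set `A` when `F` is
closed convex and `N` is compact. -/
theorem rob_lowerSemicontinuous {V : Type*} [AddCommGroup V] [Module ℝ V]
    [TopologicalSpace V] [IsTopologicalAddGroup V] [ContinuousSMul ℝ V] [T2Space V]
    (A F N : Set V)
    (hA : ∀ x ∈ A, ∀ y ∈ A, ∀ l : ℝ, l • x + (1 - l) • y ∈ A) (hAc : IsClosed A)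
    (hFA : F ⊆ A) (hF : Convex ℝ F) (hFc : IsClosed F)
    (hNA : N ⊆ A) (hNcomp : IsCompact N) :
    LowerSemicontinuousOn (fun x => Rob F N x) A :=
  rob_lowerSemicontinuous_general A F N hFc hNcomp
end

section
/- Let V be a real vector space, F ⊆ V a convex subset, N ⊆ V, and let S, T : V → V be linear maps satisfying S ∘ T = S. Then for every x ∈ V, R_{S(F),S(N)}(S x) ≤ R_{T(F),T(N)}(T x), where S(F), S(N), T(F), T(N) denote the images of the sets under the respective maps. (In the paper this shows that the sequence of finite-dimensional robustnesses R_{F_n,N_n}(β_n∘Λ∘α_n) associated to an approximation procedure is increasing in n.) -/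
open scoped ENNReal NNReal

/-- If `S ∘ T = S`, the robustness of the `S`-projected object w.r.t. the
`S`-projected sets is below that of the `T`-projected object: the sequence of
approximate robustnesses along an approximation procedure is increasing. -/
theorem rob_approx_increasing {V : Type*} [AddCommGroup V] [Module ℝ V]
    (F N : Set V) (hF : Convex ℝ F)
    (S T : V →ₗ[ℝ] V) (hST : S ∘ₗ T = S) (x : V) :
    Rob (S '' F) (S '' N) (S x) ≤ Rob (T '' F) (T '' N) (T x) := by
  apply biInf_mono
  rintro r ⟨y, ⟨n, hn, rfl⟩, f, hf, hTf⟩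
  refine ⟨S n, ⟨n, hn, rfl⟩, f, hf, ?_⟩
  have hS : ∀ v, S (T v) = S v := fun v => LinearMap.congr_fun hST v
  have := congrArg S hTf
  simpa [hS, map_smul, map_add] using this
end

section
/- Let V and W be real vector spaces, F ⊆ V convex, N ⊆ V, and T : V → W a linear map. Then for every x ∈ V, R_{T(F),T(N)}(T x) ≤ R_{F,N}(x). (In the paper this shows that each finite-dimensional approximate robustness, and hence the approximate robustness R^𝔸_{F,N}, is a lower bound on the robustness R_{F,N}.) -/
open scoped ENNReal NNReal

/-- The robustness of the image under a linear map, relative to the image sets,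
lower bounds the original robustness. -/
theorem rob_image_le {V W : Type*} [AddCommGroup V] [Module ℝ V]
    [AddCommGroup W] [Module ℝ W]
    (F N : Set V) (hF : Convex ℝ F) (T : V →ₗ[ℝ] W) (x : V) :
    Rob (T '' F) (T '' N) (T x) ≤ Rob F N x := by
  refine le_iInf₂ fun r hr => ?_
  obtain ⟨y, hy, hmem⟩ := hr
  refine iInf₂_le r ⟨T y, Set.mem_image_of_mem T hy, ?_⟩
  rw [← map_smul, ← map_add, ← map_smul]
  exact Set.mem_image_of_mem T hmem
end

section
/- Let V be a real vector space, F ⊆ V convex, N ⊆ V, and let Θ : V → V be a linear map which is a free operation, i.e. Θ(F) ⊆ F and Θ(N) ⊆ N. Then the robustness is monotone under Θ: for every x ∈ V, R_{F,N}(Θ x) ≤ R_{F,N}(x). -/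
open scoped ENNReal NNReal

/-- Monotonicity of the robustness under free operations. -/
theorem rob_monotone_free {V : Type*} [AddCommGroup V] [Module ℝ V]
    (F N : Set V) (hF : Convex ℝ F) (Θ : V →ₗ[ℝ] V)
    (hΘF : Θ '' F ⊆ F) (hΘN : Θ '' N ⊆ N) (x : V) :
    Rob F N (Θ x) ≤ Rob F N x := by
  apply le_iInf₂
  intro r hr
  obtain ⟨y, hy, hmem⟩ := hr
  refine iInf₂_le r ⟨Θ y, hΘN ⟨y, hy, rfl⟩, ?_⟩
  have : Θ ((1 + (r : ℝ))⁻¹ • (x + (r : ℝ) • y)) =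
      (1 + (r : ℝ))⁻¹ • (Θ x + (r : ℝ) • Θ y) := by
    simp [map_smul, map_add]
  rw [← this]
  exact hΘF ⟨_, hmem, rfl⟩
end

section
/- Let V be a real vector space, F ⊆ V nonempty, N ⊆ V, x ∈ V with R_{F,N}(x) < ∞, and let f : V → ℝ be a linear functional such that f(y) ≥ 0 for all y ∈ N and such that s := sup_{z ∈ F} f(z) is finite (f is bounded above on F). Then f(x) ≤ (1 + R_{F,N}(x)) · s. (This is the payoff bound underlying the game interpretation of the robustness: the payoff of any game that is nonnegative on the noise set N cannot exceed (1 + R_{F,N}) times its maximal payoff over the free set F.) -/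
open scoped ENNReal NNReal

/-!
Every admissible `r` comes with `y ∈ N` and `z = (1+r)⁻¹ (x + r y) ∈ F`, so
`f x = (1+r) f z - r f y ≤ (1+r) s`. The bound `f x ≤ (1+r) s`, holding for every admissible `r`,
passes to the infimum of the admissible `r`: for `s > 0` because it says `f x / s - 1 ≤ r`,
and for `s ≤ 0` because the right-hand side only grows as `r` decreases.
-/

section Robustness

variable {V : Type*} [AddCommGroup V] [Module ℝ V]

def robSet (F N : Set V) (x : V) : Set ℝ≥0 :=
  {r : ℝ≥0 | ∃ y ∈ N, (1 + (r : ℝ))⁻¹ • (x + (r : ℝ) • y) ∈ F}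

theorem Rob_eq_iInf_robSet (F N : Set V) (x : V) :
    Rob F N x = ⨅ r ∈ robSet F N x, (r : ℝ≥0∞) :=
  rfl

theorem robSet_nonempty_of_Rob_ne_top {F N : Set V} {x : V} (h : Rob F N x ≠ ⊤) :
    (robSet F N x).Nonempty := by
  rw [Set.nonempty_iff_ne_empty]
  rintro hempty
  simp [Rob_eq_iInf_robSet, hempty] at h

theorem Rob_toReal_eq_sInf {F N : Set V} {x : V} (h : Rob F N x ≠ ⊤) :
    (Rob F N x).toReal = sInf (((↑) : ℝ≥0 → ℝ) '' robSet F N x) := by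
  rw [Rob_eq_iInf_robSet, ← ENNReal.coe_sInf (robSet_nonempty_of_Rob_ne_top h),
    ENNReal.coe_toReal, NNReal.coe_sInf]

theorem le_one_add_mul_of_inv_smul_add_le (f : V →ₗ[ℝ] ℝ) {x y : V} {r s : ℝ}
    (hr : 0 ≤ r) (hy : 0 ≤ f y) (hz : f ((1 + r)⁻¹ • (x + r • y)) ≤ s) :
    f x ≤ (1 + r) * s := by
  have hr1 : 0 < 1 + r := by linarith
  rw [map_smul, map_add, map_smul, smul_eq_mul, smul_eq_mul, inv_mul_le_iff₀ hr1] at hz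
  nlinarith [mul_nonneg hr hy]

end Robustness

theorem le_one_add_sInf_mul {T : Set ℝ} (hne : T.Nonempty) (hbdd : BddBelow T) {c s : ℝ}
    (h : ∀ r ∈ T, c ≤ (1 + r) * s) : c ≤ (1 + sInf T) * s := by
  rcases le_or_gt s 0 with hs | hs
  · obtain ⟨r, hr⟩ := hne
    calc c ≤ (1 + r) * s := h r hr
      _ ≤ (1 + sInf T) * s :=
        mul_le_mul_of_nonpos_right (by linarith [csInf_le hbdd hr]) hs
  · have hlow : c / s - 1 ≤ sInf T := le_csInf hne fun r hr => by
      have := (div_le_iff₀ hs).mpr (h r hr)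
      linarith
    calc c = (1 + (c / s - 1)) * s := by field_simp; ring
      _ ≤ (1 + sInf T) * s := by gcongr

theorem rob_payoff_bound_general {V : Type*} [AddCommGroup V] [Module ℝ V]
    (F N : Set V) (x : V) (hfin : Rob F N x < ⊤)
    (f : V →ₗ[ℝ] ℝ) (hfN : ∀ y ∈ N, 0 ≤ f y) (hbdd : BddAbove (f '' F)) :
    f x ≤ (1 + (Rob F N x).toReal) * sSup (f '' F) := by
  rw [Rob_toReal_eq_sInf hfin.ne]
  refine le_one_add_sInf_mul ((robSet_nonempty_of_Rob_ne_top hfin.ne).image _)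
    ⟨0, by rintro _ ⟨r, -, rfl⟩; exact r.2⟩ ?_
  rintro _ ⟨r, ⟨y, hyN, hzF⟩, rfl⟩
  exact le_one_add_mul_of_inv_smul_add_le f r.2 (hfN y hyN) (le_csSup hbdd ⟨_, hzF, rfl⟩)

/-- Payoff bound underlying the game interpretation of the robustness: a linear
functional nonnegative on the noise set and bounded above on the free set satisfies
`f x ≤ (1 + R_{F,N}(x)) * sup_{z ∈ F} f z`. -/
theorem rob_payoff_bound {V : Type*} [AddCommGroup V] [Module ℝ V]
    (F N : Set V) (hFne : F.Nonempty) (x : V) (hfin : Rob F N x < ⊤)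
    (f : V →ₗ[ℝ] ℝ) (hfN : ∀ y ∈ N, 0 ≤ f y) (hbdd : BddAbove (f '' F)) :
    f x ≤ (1 + (Rob F N x).toReal) * sSup (f '' F) :=
  rob_payoff_bound_general F N x hfin f hfN hbdd
end

section
/- Let V be a real vector space, F ⊆ V nonempty, G ⊆ V, x ∈ V with W_{F,G}(x) < ∞ (the defining infimum is over a nonempty set), and let f : V → ℝ be a linear functional such that f(y) ≥ 0 for all y ∈ F ∪ G. Then, with i := inf_{z ∈ F} f(z), one has f(x) ≥ (1 − W_{F,G}(x)) · i. (This is the payoff bound underlying the game interpretation of the convex weight: the payoff of any game that is nonnegative on all admissible objects is at least (1 − W_{F,G}) times its minimal payoff over the free set F.) -/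
open scoped ENNReal NNReal

/-- The convex weight `W_{F,G}(x)`: the infimum of those `μ ∈ [0,1]` such that
`x = μ • y + (1-μ) • z` for some `y ∈ G` and `z ∈ F`, with `inf ∅ = ∞`. -/
noncomputable def Wgt {V : Type*} [AddCommGroup V] [Module ℝ V]
    (F G : Set V) (x : V) : ℝ≥0∞ :=
  ⨅ μ ∈ {μ : ℝ | 0 ≤ μ ∧ μ ≤ 1 ∧ ∃ y ∈ G, ∃ z ∈ F, x = μ • y + (1 - μ) • z},
    ENNReal.ofReal μ

/-- Payoff bound underlying the game interpretation of the convex weight: a linear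
functional nonnegative on `F ∪ G` satisfies
`f x ≥ (1 - W_{F,G}(x)) * inf_{z ∈ F} f z`. -/
theorem wgt_payoff_bound {V : Type*} [AddCommGroup V] [Module ℝ V]
    (F G : Set V) (hFne : F.Nonempty) (x : V) (hfin : Wgt F G x < ⊤)
    (f : V →ₗ[ℝ] ℝ) (hf : ∀ y ∈ F ∪ G, 0 ≤ f y) :
    (1 - (Wgt F G x).toReal) * sInf (f '' F) ≤ f x := by
  set A : Set ℝ :=
    {μ : ℝ | 0 ≤ μ ∧ μ ≤ 1 ∧ ∃ y ∈ G, ∃ z ∈ F, x = μ • y + (1 - μ) • z} with hA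
  set i : ℝ := sInf (f '' F) with hi
  have hbdd : BddBelow (f '' F) := ⟨0, by rintro _ ⟨z, hz, rfl⟩; exact hf z (Or.inl hz)⟩
  have hi0 : 0 ≤ i := Real.sInf_nonneg (by rintro _ ⟨z, hz, rfl⟩; exact hf z (Or.inl hz))
  have hAne : A.Nonempty := by
    by_contra h
    rw [Set.not_nonempty_iff_eq_empty] at h
    have : Wgt F G x = ⊤ := by
      rw [Wgt, ← hA, h]; simp
    rw [this] at hfin; exact lt_irrefl _ hfin
  have h1 : ∀ μ ∈ A, (1 - μ) * i ≤ f x := by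
    rintro μ ⟨hμ0, hμ1, y, hy, z, hz, hx⟩
    have hfy : 0 ≤ f y := hf y (Or.inr hy)
    have hfz : i ≤ f z := csInf_le hbdd ⟨z, hz, rfl⟩
    have : f x = μ * f y + (1 - μ) * f z := by
      rw [hx]; simp [map_add, map_smul]
    nlinarith
  -- key approximation fact
  have key : ∀ ε > (0:ℝ), ∃ μ ∈ A, μ ≤ (Wgt F G x).toReal + ε := by
    intro ε hε
    have hlt : Wgt F G x < Wgt F G x + ENNReal.ofReal ε :=
      ENNReal.lt_add_right hfin.ne (by simpa using hε)
    rw [Wgt, ← hA] at hlt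
    rw [iInf_lt_iff] at hlt
    obtain ⟨μ, hlt⟩ := hlt
    rw [iInf_lt_iff] at hlt
    obtain ⟨hμA, hμlt⟩ := hlt
    refine ⟨μ, hμA, ?_⟩
    have hμ0 : 0 ≤ μ := hμA.1
    have h2 := (ENNReal.toReal_le_toReal (a := ENNReal.ofReal μ)
      (b := Wgt F G x + ENNReal.ofReal ε) (by simp) (by
        simp [ENNReal.add_ne_top, hfin.ne])).mpr hμlt.le
    rwa [ENNReal.toReal_ofReal hμ0, ENNReal.toReal_add hfin.ne (by simp),
      ENNReal.toReal_ofReal hε.le] at h2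
  rcases eq_or_lt_of_le hi0 with hieq | hipos
  · -- i = 0
    obtain ⟨μ, hμA⟩ := hAne
    have := h1 μ hμA
    rw [← hieq] at *
    simpa using this
  · -- i > 0 : for every ε > 0, (1 - W)*i ≤ f x + ε
    have hW : ∀ ε > (0:ℝ), (1 - (Wgt F G x).toReal) * i ≤ f x + ε := by
      intro ε hε
      obtain ⟨μ, hμA, hμle⟩ := key (ε / i) (by positivity)
      have h2 := h1 μ hμA
      have : (1 - (Wgt F G x).toReal) * i ≤ (1 - μ) * i + ε := by
        have : (ε / i) * i = ε := div_mul_cancel₀ ε hipos.ne'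
        nlinarith
      linarith
    exact le_of_forall_pos_le_add hW
end

section
/- Let V be a real vector space, F ⊆ V convex, N ⊆ V, and let T : V → V be an idempotent linear map (T ∘ T = T) with T(F) ⊆ F and T(N) ⊆ N. Then for every x ∈ V, R_{F,N}(T x) = R_{T(F),T(N)}(T x). (This is the key step in the proof of Observation 1: when the approximation procedure maps the free set into itself and the noise set into itself, the robustness of the approximated object relative to the original sets equals its robustness relative to the approximated sets.) -/
open scoped ENNReal NNReal

/-- Key step in the proof of Observation 1: for an idempotent linear map `T` with
`T(F) ⊆ F` and `T(N) ⊆ N`, the robustness of `T x` relative to the original sets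
equals its robustness relative to the projected sets. -/
theorem rob_idempotent_eq {V : Type*} [AddCommGroup V] [Module ℝ V]
    (F N : Set V) (hF : Convex ℝ F) (T : V →ₗ[ℝ] V) (hT : T ∘ₗ T = T)
    (hTF : T '' F ⊆ F) (hTN : T '' N ⊆ N) (x : V) :
    Rob F N (T x) = Rob (T '' F) (T '' N) (T x) := by
  have hTT : ∀ v, T (T v) = T v := fun v => DFunLike.congr_fun hT v
  have hset : {r : ℝ≥0 | ∃ y ∈ N, (1 + (r : ℝ))⁻¹ • (T x + (r : ℝ) • y) ∈ F}
      = {r : ℝ≥0 | ∃ y ∈ T '' N, (1 + (r : ℝ))⁻¹ • (T x + (r : ℝ) • y) ∈ T '' F} := by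
    ext r
    constructor
    · rintro ⟨y, hy, hz⟩
      refine ⟨T y, ⟨y, hy, rfl⟩, ?_⟩
      have key : T ((1 + (r : ℝ))⁻¹ • (T x + (r : ℝ) • y))
          = (1 + (r : ℝ))⁻¹ • (T x + (r : ℝ) • T y) := by
        simp [map_smul, map_add, hTT]
      exact key ▸ ⟨_, hz, rfl⟩
    · rintro ⟨y, hyN, hz⟩
      exact ⟨y, hTN hyN, hTF hz⟩
  unfold Rob
  rw [hset]
end

section
/- Let V be a real vector space, F ⊆ V, G ⊆ V, and let Θ : V → V be a linear map which is a free operation, i.e. Θ(F) ⊆ F and Θ(G) ⊆ G. Then the convex weight is monotone under Θ: for every x ∈ V, W_{F,G}(Θ x) ≤ W_{F,G}(x). -/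
open scoped ENNReal NNReal

/-- Monotonicity of the convex weight under free operations. -/
theorem wgt_monotone_free {V : Type*} [AddCommGroup V] [Module ℝ V]
    (F G : Set V) (Θ : V →ₗ[ℝ] V) (hΘF : Θ '' F ⊆ F) (hΘG : Θ '' G ⊆ G) (x : V) :
    Wgt F G (Θ x) ≤ Wgt F G x := by
  refine le_iInf₂ fun μ hμ => ?_
  obtain ⟨h0, h1, y, hy, z, hz, hx⟩ := hμ
  refine iInf₂_le μ ⟨h0, h1, Θ y, hΘG ⟨y, hy, rfl⟩, Θ z, hΘF ⟨z, hz, rfl⟩, ?_⟩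
  rw [hx]; simp [map_add, map_smul]
end

section
/- (Observation 2) Let F be a convex set of d×d density matrices and ρ a d×d density matrix such that there exist σ ∈ F and λ > 0 with ρ ≤ λ·σ (so that all quantities below are finite). Define the max-relative entropy D_max(ρ‖σ) := log inf { λ ∈ (0,∞) : ρ ≤ λ·σ } for those σ for which some such λ exists, and the max entropy of ρ with respect to F as E_max(ρ) := inf { D_max(ρ‖σ) : σ ∈ F and ∃ λ > 0 with ρ ≤ λ·σ }. Then E_max(ρ) = log(1 + R_F(ρ)). -/
open scoped ENNReal NNReal ComplexOrder

/-- A density matrix: a positive semidefinite complex matrix of trace one. -/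
def IsDensity {d : ℕ} (ρ : Matrix (Fin d) (Fin d) ℂ) : Prop :=
  ρ.PosSemidef ∧ ρ.trace = 1

/-- The generalized robustness of a state `ρ` w.r.t. a free set `F`:
the infimum of those `t ≥ 0` for which there are a density matrix `τ` and `σ ∈ F`
with `ρ + t • τ = (1 + t) • σ`, with `inf ∅ = ∞`. -/
noncomputable def Rgen {d : ℕ} (F : Set (Matrix (Fin d) (Fin d) ℂ))
    (ρ : Matrix (Fin d) (Fin d) ℂ) : ℝ≥0∞ :=
  ⨅ t ∈ {t : ℝ≥0 | ∃ τ, IsDensity τ ∧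
      ∃ σ ∈ F, ρ + (t : ℝ) • τ = ((1 : ℝ) + (t : ℝ)) • σ}, (t : ℝ≥0∞)

/-- The max-relative entropy `D_max(ρ‖σ) = log inf {λ > 0 | ρ ≤ λ • σ}`. -/
noncomputable def Dmax {d : ℕ} (ρ σ : Matrix (Fin d) (Fin d) ℂ) : ℝ :=
  Real.log (sInf {l : ℝ | 0 < l ∧ (l • σ - ρ).PosSemidef})

/-!
Both sides are governed by the scales `l > 0` with `ρ ≤ l • σ` for some `σ ∈ F`. A decomposition
`ρ + t • τ = (1 + t) • σ` with `t > 0` is the same as `ρ ≤ (1 + t) • σ`, the state being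
`τ = t⁻¹ • ((1 + t) • σ - ρ)`, so `1 + R_F(ρ)` is the infimum of these scales (all `≥ 1` by taking
traces). `E_max(ρ)` is the logarithm of the same infimum, taken first over `l` and then over `σ`,
since `log` is continuous and increasing on `(0, ∞)`.
-/

namespace Real

lemma log_sInf {s : Set ℝ} (hs : s.Nonempty) (hbdd : BddBelow s) (hpos : 0 < sInf s) :
    log (sInf s) = sInf (log '' s) :=
  MonotoneOn.map_csInf_of_continuousWithinAt (continuousAt_log hpos.ne').continuousWithinAt
    (strictMonoOn_log.monotoneOn.mono fun _ hx => hpos.trans_le (csInf_le hbdd hx)) hs hbdd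

lemma sInf_image_sInf {ι : Type*} {S : ι → Set ℝ} {F : Set ι} (hS : ∀ i, ∀ x ∈ S i, 0 ≤ x)
    (hne : ∃ i ∈ F, (S i).Nonempty) :
    sInf ((fun i => sInf (S i)) '' {i | i ∈ F ∧ (S i).Nonempty}) = sInf (⋃ i ∈ F, S i) := by
  obtain ⟨i₀, hi₀, x₀, hx₀⟩ := hne
  have hbdd : ∀ i, BddBelow (S i) := fun i => ⟨0, hS i⟩
  have hbddImg : BddBelow ((fun i => sInf (S i)) '' {i | i ∈ F ∧ (S i).Nonempty}) :=
    ⟨0, Set.forall_mem_image.2 fun j _ => sInf_nonneg (hS j)⟩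
  apply le_antisymm
  · refine le_csInf ⟨x₀, Set.mem_biUnion hi₀ hx₀⟩ fun x hx => ?_
    obtain ⟨i, hi, hx⟩ := Set.mem_iUnion₂.1 hx
    calc _ ≤ sInf (S i) := csInf_le hbddImg ⟨i, ⟨hi, x, hx⟩, rfl⟩
      _ ≤ x := csInf_le (hbdd i) hx
  · refine le_csInf ⟨_, i₀, ⟨hi₀, x₀, hx₀⟩, rfl⟩ ?_
    rintro _ ⟨i, ⟨hi, hSi⟩, rfl⟩
    refine le_csInf hSi fun x hx => csInf_le ⟨0, ?_⟩ (Set.mem_biUnion hi hx)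
    simpa only [mem_lowerBounds, Set.mem_iUnion₂] using fun y ⟨j, _, hy⟩ => hS j y hy

end Real

namespace Matrix

variable {n : Type*} {σ ρ : Matrix n n ℂ}

lemma one_le_of_posSemidef_smul_sub [Fintype n] (hσ : σ.trace = 1) (hρ : ρ.trace = 1) {l : ℝ}
    (h : (l • σ - ρ).PosSemidef) : 1 ≤ l := by
  have := h.trace_nonneg
  rw [trace_sub, trace_smul, hσ, hρ, Complex.real_smul, mul_one, sub_nonneg] at this
  exact_mod_cast this

lemma PosSemidef.smul_sub_of_le (hσ : σ.PosSemidef) {l l' : ℝ} (hl : l ≤ l')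
    (h : (l • σ - ρ).PosSemidef) : (l' • σ - ρ).PosSemidef := by
  have : l' • σ - ρ = (l' - l) • σ + (l • σ - ρ) := by module
  exact this ▸ (hσ.smul (sub_nonneg.2 hl)).add h

end Matrix

open Matrix

section Robustness

variable {d : ℕ} (F : Set (Matrix (Fin d) (Fin d) ℂ)) (ρ : Matrix (Fin d) (Fin d) ℂ)

def robustnessParams : Set ℝ≥0 :=
  {t | ∃ τ, IsDensity τ ∧ ∃ σ ∈ F, ρ + (t : ℝ) • τ = ((1 : ℝ) + (t : ℝ)) • σ}

def dominationScales : Set ℝ :=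
  ⋃ σ ∈ F, {l | 0 < l ∧ (l • σ - ρ).PosSemidef}

variable {F ρ}

lemma one_le_of_mem_dominationScales (hFd : ∀ σ ∈ F, IsDensity σ) (hρ : ρ.trace = 1) {l : ℝ}
    (hl : l ∈ dominationScales F ρ) : 1 ≤ l := by
  obtain ⟨σ, hσ, -, h⟩ := Set.mem_iUnion₂.1 hl
  exact one_le_of_posSemidef_smul_sub (hFd σ hσ).2 hρ h

lemma mem_dominationScales_of_le (hFd : ∀ σ ∈ F, IsDensity σ) {l l' : ℝ}
    (hl : l ∈ dominationScales F ρ) (hll' : l ≤ l') : l' ∈ dominationScales F ρ := by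
  obtain ⟨σ, hσ, hpos, h⟩ := Set.mem_iUnion₂.1 hl
  exact Set.mem_biUnion hσ ⟨hpos.trans_le hll', (hFd σ hσ).1.smul_sub_of_le hll' h⟩

lemma one_add_mem_dominationScales {t : ℝ≥0} (ht : t ∈ robustnessParams F ρ) :
    1 + (t : ℝ) ∈ dominationScales F ρ := by
  obtain ⟨τ, hτ, σ, hσ, heq⟩ := ht
  have : ((1 : ℝ) + t) • σ - ρ = (t : ℝ) • τ := by rw [← heq]; abel
  exact Set.mem_biUnion hσ ⟨by positivity, this ▸ hτ.1.smul t.coe_nonneg⟩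

lemma exists_mem_robustnessParams (hFd : ∀ σ ∈ F, IsDensity σ) (hρ : ρ.trace = 1) {l : ℝ}
    (hl : l ∈ dominationScales F ρ) (h1 : 1 < l) :
    ∃ t ∈ robustnessParams F ρ, (t : ℝ) = l - 1 := by
  obtain ⟨σ, hσ, -, hpsd⟩ := Set.mem_iUnion₂.1 hl
  have ht : 0 < l - 1 := sub_pos.2 h1
  refine ⟨⟨l - 1, ht.le⟩,
    ⟨(l - 1)⁻¹ • (l • σ - ρ), ⟨hpsd.smul (inv_nonneg.2 ht.le), ?_⟩, σ, hσ, ?_⟩, rfl⟩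
  · rw [trace_smul, trace_sub, trace_smul, (hFd σ hσ).2, hρ, Complex.real_smul, Complex.real_smul,
      mul_one, ← Complex.ofReal_one, ← Complex.ofReal_sub, ← Complex.ofReal_mul,
      inv_mul_cancel₀ ht.ne', Complex.ofReal_one]
  · show ρ + (l - 1) • ((l - 1)⁻¹ • (l • σ - ρ)) = ((1 : ℝ) + (l - 1)) • σ
    rw [smul_smul, mul_inv_cancel₀ ht.ne', one_smul, add_sub_cancel, add_sub_cancel]

lemma toReal_rgen_eq_sInf (hne : (robustnessParams F ρ).Nonempty) :
    (Rgen F ρ).toReal = sInf (((↑) : ℝ≥0 → ℝ) '' robustnessParams F ρ) := by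
  rw [← NNReal.coe_sInf, ← ENNReal.coe_toReal, ENNReal.coe_sInf hne]
  rfl

lemma one_add_toReal_rgen (hFd : ∀ σ ∈ F, IsDensity σ) (hρ : ρ.trace = 1)
    (hne : (dominationScales F ρ).Nonempty) :
    1 + (Rgen F ρ).toReal = sInf (dominationScales F ρ) := by
  obtain ⟨l₀, hl₀⟩ := hne
  have hone : ∀ l ∈ dominationScales F ρ, 1 ≤ l := fun _ => one_le_of_mem_dominationScales hFd hρ
  obtain ⟨t₀, ht₀, -⟩ := exists_mem_robustnessParams hFd hρ
    (mem_dominationScales_of_le hFd hl₀ (le_add_of_nonneg_right zero_le_one))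
    (by linarith [hone l₀ hl₀])
  rw [toReal_rgen_eq_sInf ⟨t₀, ht₀⟩]
  apply le_antisymm
  · refine le_csInf ⟨l₀, hl₀⟩ fun l hl => le_of_forall_pos_le_add fun ε hε => ?_
    obtain ⟨t, ht, htl⟩ := exists_mem_robustnessParams hFd hρ
      (mem_dominationScales_of_le hFd hl (le_add_of_nonneg_right hε.le)) (by linarith [hone l hl])
    have := csInf_le ⟨0, Set.forall_mem_image.2 fun t _ => t.coe_nonneg⟩ ⟨t, ht, rfl⟩
    linarith
  · rw [← sub_le_iff_le_add']
    refine le_csInf ⟨_, t₀, ht₀, rfl⟩ ?_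
    rintro _ ⟨t, ht, rfl⟩
    have := csInf_le ⟨1, hone⟩ (one_add_mem_dominationScales ht)
    linarith

end Robustness

theorem emax_eq_log_one_add_rgen_general {d : ℕ} (F : Set (Matrix (Fin d) (Fin d) ℂ))
    (hFd : ∀ σ ∈ F, IsDensity σ)
    (ρ : Matrix (Fin d) (Fin d) ℂ) (hρ : IsDensity ρ)
    (hex : ∃ σ ∈ F, ∃ l : ℝ, 0 < l ∧ (l • σ - ρ).PosSemidef) :
    sInf (Dmax ρ '' {σ | σ ∈ F ∧ ∃ l : ℝ, 0 < l ∧ (l • σ - ρ).PosSemidef}) =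
      Real.log (1 + (Rgen F ρ).toReal) := by
  set G := {σ | σ ∈ F ∧ ∃ l : ℝ, 0 < l ∧ (l • σ - ρ).PosSemidef}
  set scale := fun σ : Matrix (Fin d) (Fin d) ℂ => sInf {l : ℝ | 0 < l ∧ (l • σ - ρ).PosSemidef}
  have hne : (dominationScales F ρ).Nonempty :=
    let ⟨σ, hσ, l, hl⟩ := hex
    ⟨l, Set.mem_biUnion hσ hl⟩
  have hinf : sInf (scale '' G) = 1 + (Rgen F ρ).toReal :=
    (Real.sInf_image_sInf (fun _ _ hx => hx.1.le) hex).trans (one_add_toReal_rgen hFd hρ.2 hne).symm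
  have hbdd : BddBelow (scale '' G) :=
    ⟨0, Set.forall_mem_image.2 fun _ _ => Real.sInf_nonneg fun _ hx => hx.1.le⟩
  have hG : (scale '' G).Nonempty :=
    let ⟨σ, hσ, hl⟩ := hex
    ⟨scale σ, σ, ⟨hσ, hl⟩, rfl⟩
  rw [← hinf, Real.log_sInf hG hbdd (hinf ▸ by positivity), Set.image_image]
  rfl

/-- Observation 2: the max entropy of `ρ` w.r.t. the free set `F` equals
`log (1 + R_F(ρ))`. -/
theorem emax_eq_log_one_add_rgen {d : ℕ} (F : Set (Matrix (Fin d) (Fin d) ℂ))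
    (hF : Convex ℝ F) (hFd : ∀ σ ∈ F, IsDensity σ)
    (ρ : Matrix (Fin d) (Fin d) ℂ) (hρ : IsDensity ρ)
    (hex : ∃ σ ∈ F, ∃ l : ℝ, 0 < l ∧ (l • σ - ρ).PosSemidef) :
    sInf (Dmax ρ '' {σ | σ ∈ F ∧ ∃ l : ℝ, 0 < l ∧ (l • σ - ρ).PosSemidef}) =
      Real.log (1 + (Rgen F ρ).toReal) :=
  emax_eq_log_one_add_rgen_general F hFd ρ hρ hex
end

section
/- (Finite-dimensional duality for the convex weight of states) Let F be a nonempty compact convex set of d×d density matrices and let ρ be a d×d density matrix. Then 1 − W_F(ρ) = inf { Re(tr(Y·ρ)) : Y a d×d positive semidefinite matrix such that Re(tr(Y·σ)) ≥ 1 for all σ ∈ F }. -/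
open scoped ENNReal NNReal ComplexOrder

/-- The convex weight of a state `ρ` w.r.t. a free set `F`: the infimum of those
`μ ∈ [0,1]` for which there are a density matrix `τ` and `σ ∈ F` with
`ρ = μ • τ + (1 - μ) • σ`, with `inf ∅ = ∞`. -/
noncomputable def WgtS {d : ℕ} (F : Set (Matrix (Fin d) (Fin d) ℂ))
    (ρ : Matrix (Fin d) (Fin d) ℂ) : ℝ≥0∞ :=
  ⨅ μ ∈ {μ : ℝ | 0 ≤ μ ∧ μ ≤ 1 ∧ ∃ τ, IsDensity τ ∧
      ∃ σ ∈ F, ρ = μ • τ + (1 - μ) • σ}, ENNReal.ofReal μ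

/-!
A weight `μ` is achievable iff `ρ - (1 - μ) • σ` is positive semidefinite for some `σ ∈ F` (then
`τ` is this difference renormalised), so `1 - W_F(ρ)` is the largest `λ` with `ρ ≥ λ σ` for some
`σ ∈ F`. Any dual feasible `Y` gives `Re tr(Y ρ) ≥ λ Re tr(Y σ) ≥ λ`. Conversely, for `λ'` above
the optimum the compact convex set `{ρ - λ' σ | σ ∈ F}` misses the closed convex cone of positive
semidefinite matrices. A strictly separating real functional is `Re tr(H ·)` on Hermitian
matrices for a Hermitian `H`, which is positive semidefinite since the functional is bounded
below on the cone, and a rescaling of `H` is a dual feasible `Y` with `Re tr(Y ρ) < λ'`.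
-/

open Matrix

namespace Matrix

variable {n : Type*}

theorem convex_setOf_posSemidef : Convex ℝ {A : Matrix n n ℂ | A.PosSemidef} :=
  fun _ hA _ hB _ _ ha hb _ => (hA.smul ha).add (hB.smul hb)

variable [Fintype n]

theorem isClosed_setOf_posSemidef : IsClosed {A : Matrix n n ℂ | A.PosSemidef} := by
  classical
  open scoped MatrixOrder Matrix.Norms.L2Operator in
  simpa only [nonneg_iff_posSemidef] using CStarAlgebra.isClosed_nonneg (A := Matrix n n ℂ)

theorem PosSemidef.re_trace_mul_nonneg {Y P : Matrix n n ℂ} (hY : Y.PosSemidef)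
    (hP : P.PosSemidef) : 0 ≤ (Y * P).trace.re := by
  classical
  open scoped MatrixOrder Matrix.Norms.L2Operator in
  obtain ⟨B, rfl⟩ := CStarAlgebra.nonneg_iff_eq_star_mul_self.mp hY.nonneg
  rw [star_eq_conjTranspose, Matrix.mul_assoc, trace_mul_comm]
  exact (Complex.nonneg_iff.mp (hP.mul_mul_conjTranspose_same B).trace_nonneg).1

noncomputable def reTraceForm : LinearMap.BilinForm ℝ (Matrix n n ℂ) :=
  (LinearMap.mul ℝ (Matrix n n ℂ)).compr₂ (Complex.reLm.comp (traceLinearMap n ℝ ℂ))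

@[simp] theorem reTraceForm_apply (Y X : Matrix n n ℂ) :
    reTraceForm Y X = (Y * X).trace.re := rfl

theorem eq_zero_of_re_trace_mul_conjTranspose_self {A : Matrix n n ℂ}
    (h : (A * Aᴴ).trace.re = 0) : A = 0 := by
  rw [← trace_mul_conjTranspose_self_eq_zero_iff, ← Complex.re_add_im (trace _), h,
    ← (Complex.nonneg_iff.mp (posSemidef_self_mul_conjTranspose A).trace_nonneg).2]
  simp

theorem reTraceForm_nondegenerate :
    (reTraceForm : LinearMap.BilinForm ℝ (Matrix n n ℂ)).Nondegenerate := by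
  refine (LinearMap.IsRefl.nondegenerate_iff_separatingLeft fun Y X h => ?_).mpr fun Y hY => ?_
  · rwa [reTraceForm_apply, trace_mul_comm]
  · exact eq_zero_of_re_trace_mul_conjTranspose_self (hY Yᴴ)

theorem IsHermitian.re_trace_conjTranspose_mul {X : Matrix n n ℂ} (hX : X.IsHermitian)
    (Y : Matrix n n ℂ) : (Yᴴ * X).trace.re = (Y * X).trace.re := by
  conv_lhs => rw [← hX.eq, ← conjTranspose_mul, trace_conjTranspose, trace_mul_comm]
  exact Complex.conj_re _

theorem exists_isHermitian_re_trace_mul_eq (f : Matrix n n ℂ →ₗ[ℝ] ℝ) :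
    ∃ H : Matrix n n ℂ, H.IsHermitian ∧ ∀ X, X.IsHermitian → (H * X).trace.re = f X := by
  set Y := (reTraceForm.toDual reTraceForm_nondegenerate).symm f
  have hY (X : Matrix n n ℂ) : (Y * X).trace.re = f X :=
    LinearMap.BilinForm.apply_toDual_symm_apply (hB := reTraceForm_nondegenerate) f X
  refine ⟨(2⁻¹ : ℝ) • (Y + Yᴴ), ?_, fun X hX => ?_⟩
  · simp [IsHermitian, conjTranspose_smul, add_comm]
  · simp only [Matrix.smul_mul, add_mul, trace_smul, trace_add, Complex.smul_re, Complex.add_re,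
      hX.re_trace_conjTranspose_mul, hY, smul_eq_mul]
    ring

theorem IsHermitian.posSemidef_of_re_trace_mul_nonneg {H : Matrix n n ℂ} (hH : H.IsHermitian)
    (h : ∀ P : Matrix n n ℂ, P.PosSemidef → 0 ≤ (H * P).trace.re) : H.PosSemidef := by
  refine .of_dotProduct_mulVec_nonneg hH fun x => Complex.nonneg_iff.mpr
    ⟨?_, (hH.im_star_dotProduct_mulVec_self x).symm⟩
  simpa [mul_vecMulVec, trace_vecMulVec, dotProduct_comm]
    using h _ (posSemidef_vecMulVec_self_star x)

theorem exists_posSemidef_re_trace_mul_lt_neg_one {K : Set (Matrix n n ℂ)}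
    (hcomp : IsCompact K) (hconv : Convex ℝ K) (hherm : ∀ A ∈ K, A.IsHermitian)
    (hdisj : ∀ A ∈ K, ¬ A.PosSemidef) :
    ∃ H : Matrix n n ℂ, H.PosSemidef ∧ ∀ A ∈ K, (H * A).trace.re < -1 := by
  have : LocallyConvexSpace ℝ (Matrix n n ℂ) := inferInstanceAs (LocallyConvexSpace ℝ (n → n → ℂ))
  obtain ⟨f, u, v, hfK, huv, hfP⟩ := geometric_hahn_banach_compact_closed hconv hcomp
    convex_setOf_posSemidef isClosed_setOf_posSemidef (Set.disjoint_left.mpr hdisj)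
  have hv : v < 0 := by simpa using hfP 0 .zero
  -- `f` is bounded below on the cone of positive semidefinite matrices, hence nonnegative on it.
  have hf_nonneg (P : Matrix n n ℂ) (hP : P.PosSemidef) : 0 ≤ f P := by
    by_contra! hneg
    have := hfP ((v / f P) • P) (hP.smul (div_nonneg_of_nonpos hv.le hneg.le))
    rw [map_smul, smul_eq_mul, div_mul_cancel₀ _ hneg.ne] at this
    exact lt_irrefl v this
  obtain ⟨H, hH, hHf⟩ := exists_isHermitian_re_trace_mul_eq f.toLinearMap
  simp only [ContinuousLinearMap.coe_coe] at hHf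
  have hu : 0 < -u := by linarith
  refine ⟨(-u)⁻¹ • H, (hH.posSemidef_of_re_trace_mul_nonneg fun P hP => ?_).smul
    (inv_nonneg.mpr hu.le), fun A hA => ?_⟩
  · simpa [hHf P hP.isHermitian] using hf_nonneg P hP
  · rw [Matrix.smul_mul, trace_smul, Complex.smul_re, hHf A (hherm A hA), smul_eq_mul,
      inv_mul_lt_iff₀ hu]
    linarith [hfK A hA]

theorem exists_posSemidef_dual_witness {F : Set (Matrix n n ℂ)} (hcomp : IsCompact F)
    (hconv : Convex ℝ F) (hherm : ∀ σ ∈ F, σ.IsHermitian) {ρ : Matrix n n ℂ}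
    (hρ : ρ.PosSemidef) {t : ℝ} (ht : 0 < t) (hno : ∀ σ ∈ F, ¬ (ρ - t • σ).PosSemidef) :
    ∃ Y : Matrix n n ℂ, Y.PosSemidef ∧ (∀ σ ∈ F, 1 ≤ (Y * σ).trace.re) ∧
      (Y * ρ).trace.re < t := by
  set K := (fun σ => ρ - t • σ) '' F
  have hKconv : Convex ℝ K := by
    have := (hconv.smul (-t)).translate ρ
    rw [← Set.image_smul, Set.image_image] at this
    simpa only [neg_smul, ← sub_eq_add_neg] using this
  obtain ⟨H, hH, hHK⟩ := exists_posSemidef_re_trace_mul_lt_neg_one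
    (hcomp.image (by fun_prop)) hKconv
    (Set.forall_mem_image.mpr fun σ hσ => hρ.isHermitian.sub ((hherm σ hσ).smul (.all t)))
    (Set.forall_mem_image.mpr hno)
  have hHσ (σ : Matrix n n ℂ) (hσ : σ ∈ F) :
      (H * ρ).trace.re - t * (H * σ).trace.re < -1 := by
    simpa [Matrix.mul_sub, trace_sub] using hHK _ (Set.mem_image_of_mem _ hσ)
  set a := (H * ρ).trace.re
  have ha : 0 ≤ a := hH.re_trace_mul_nonneg hρ
  refine ⟨(t / (1 + a)) • H, hH.smul (by positivity), fun σ hσ => ?_, ?_⟩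
  · rw [Matrix.smul_mul, trace_smul, Complex.smul_re, smul_eq_mul, div_mul_eq_mul_div,
      le_div_iff₀ (by positivity)]
    linarith [hHσ σ hσ]
  · rw [Matrix.smul_mul, trace_smul, Complex.smul_re, smul_eq_mul, div_mul_eq_mul_div,
      div_lt_iff₀ (by positivity)]
    nlinarith

end Matrix

section ConvexWeight

variable {n : Type*}

def feasibleWeights (F : Set (Matrix n n ℂ)) (ρ : Matrix n n ℂ) : Set ℝ :=
  {μ | 0 ≤ μ ∧ μ ≤ 1 ∧ ∃ σ ∈ F, (ρ - (1 - μ) • σ).PosSemidef}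

variable {F : Set (Matrix n n ℂ)} {ρ : Matrix n n ℂ}

theorem bddBelow_feasibleWeights : BddBelow (feasibleWeights F ρ) :=
  ⟨0, fun _ hμ => hμ.1⟩

theorem one_mem_feasibleWeights (hρ : ρ.PosSemidef) (hne : F.Nonempty) :
    1 ∈ feasibleWeights F ρ := by
  obtain ⟨σ, hσ⟩ := hne
  exact ⟨zero_le_one, le_rfl, σ, hσ, by simpa using hρ⟩

theorem one_sub_mem_feasibleWeights [Fintype n] {σ : Matrix n n ℂ} (hσF : σ ∈ F)
    (hρ : ρ.trace = 1) (hσ : σ.trace = 1) {t : ℝ} (ht : 0 ≤ t) (h : (ρ - t • σ).PosSemidef) :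
    1 - t ∈ feasibleWeights F ρ := by
  have htr : 0 ≤ (ρ - t • σ).trace := h.trace_nonneg
  rw [trace_sub, trace_smul, hρ, hσ, Complex.real_smul, mul_one, ← Complex.ofReal_one,
    ← Complex.ofReal_sub, Complex.zero_le_real] at htr
  exact ⟨by linarith, by linarith, σ, hσF, by rwa [sub_sub_cancel]⟩

theorem one_sub_le_re_trace_mul [Fintype n] {μ : ℝ} (hμ : μ ∈ feasibleWeights F ρ)
    {Y : Matrix n n ℂ} (hY : Y.PosSemidef) (hYF : ∀ σ ∈ F, 1 ≤ (Y * σ).trace.re) :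
    1 - μ ≤ (Y * ρ).trace.re := by
  obtain ⟨-, hμ1, σ, hσ, hD⟩ := hμ
  have h := hY.re_trace_mul_nonneg hD
  rw [Matrix.mul_sub, trace_sub, Matrix.mul_smul, trace_smul, Complex.sub_re,
    Complex.smul_re, smul_eq_mul] at h
  nlinarith [hYF σ hσ]

end ConvexWeight

section Density

variable {d : ℕ}

theorem exists_isDensity_decomposition_iff {ρ σ : Matrix (Fin d) (Fin d) ℂ} (hρ : IsDensity ρ)
    (hσ : σ.trace = 1) {μ : ℝ} (hμ : 0 ≤ μ) :
    (∃ τ, IsDensity τ ∧ ρ = μ • τ + (1 - μ) • σ) ↔ (ρ - (1 - μ) • σ).PosSemidef := by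
  refine ⟨fun ⟨τ, hτ, hρτ⟩ => ?_, fun hD => ?_⟩
  · rw [hρτ, add_sub_cancel_right]
    exact hτ.1.smul hμ
  have htr : (ρ - (1 - μ) • σ).trace = μ := by
    rw [trace_sub, trace_smul, hρ.2, hσ, Complex.real_smul]
    push_cast
    ring
  rcases hμ.eq_or_lt with rfl | hμ
  · refine ⟨ρ, hρ, ?_⟩
    rw [Complex.ofReal_zero, hD.trace_eq_zero_iff, sub_eq_zero] at htr
    simpa using htr
  · refine ⟨μ⁻¹ • (ρ - (1 - μ) • σ), ⟨hD.smul (inv_nonneg.mpr hμ.le), ?_⟩, ?_⟩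
    · rw [trace_smul, htr, Complex.real_smul, ← Complex.ofReal_mul, inv_mul_cancel₀ hμ.ne',
        Complex.ofReal_one]
    · rw [smul_smul, mul_inv_cancel₀ hμ.ne', one_smul, sub_add_cancel]

theorem WgtS_eq_iInf_feasibleWeights {F : Set (Matrix (Fin d) (Fin d) ℂ)}
    {ρ : Matrix (Fin d) (Fin d) ℂ} (hρ : IsDensity ρ) (hF : ∀ σ ∈ F, σ.trace = 1) :
    WgtS F ρ = ⨅ μ ∈ feasibleWeights F ρ, ENNReal.ofReal μ := by
  have hsets : {μ : ℝ | 0 ≤ μ ∧ μ ≤ 1 ∧ ∃ τ, IsDensity τ ∧ ∃ σ ∈ F, ρ = μ • τ + (1 - μ) • σ} =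
      feasibleWeights F ρ := by
    ext μ
    refine and_congr_right fun hμ => and_congr_right fun _ => ?_
    constructor
    · rintro ⟨τ, hτ, σ, hσ, h⟩
      exact ⟨σ, hσ, (exists_isDensity_decomposition_iff hρ (hF σ hσ) hμ).mp ⟨τ, hτ, h⟩⟩
    · rintro ⟨σ, hσ, h⟩
      obtain ⟨τ, hτ, h⟩ := (exists_isDensity_decomposition_iff hρ (hF σ hσ) hμ).mpr h
      exact ⟨τ, hτ, σ, hσ, h⟩
  rw [WgtS, hsets]

theorem toReal_WgtS {F : Set (Matrix (Fin d) (Fin d) ℂ)} (hne : F.Nonempty)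
    (hF : ∀ σ ∈ F, σ.trace = 1) {ρ : Matrix (Fin d) (Fin d) ℂ} (hρ : IsDensity ρ) :
    (WgtS F ρ).toReal = sInf (feasibleWeights F ρ) := by
  have hP : (feasibleWeights F ρ).Nonempty := ⟨1, one_mem_feasibleWeights hρ.1 hne⟩
  rw [WgtS_eq_iInf_feasibleWeights hρ hF, ← sInf_image,
    ← Monotone.map_csInf_of_continuousAt ENNReal.continuous_ofReal.continuousAt
      ENNReal.ofReal_mono hP bddBelow_feasibleWeights,
    ENNReal.toReal_ofReal (le_csInf hP fun _ hμ => hμ.1)]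

end Density

/-- Finite-dimensional duality for the convex weight of states:
`1 - W_F(ρ)` equals the optimal value of the dual program over witnesses `Y ≥ 0`
with `Re tr(Y σ) ≥ 1` on `F`. -/
theorem wgt_duality {d : ℕ} (F : Set (Matrix (Fin d) (Fin d) ℂ))
    (hne : F.Nonempty) (hcomp : IsCompact F) (hconv : Convex ℝ F)
    (hFd : ∀ σ ∈ F, IsDensity σ)
    (ρ : Matrix (Fin d) (Fin d) ℂ) (hρ : IsDensity ρ) :
    1 - (WgtS F ρ).toReal =
      sInf {x : ℝ | ∃ Y : Matrix (Fin d) (Fin d) ℂ, Y.PosSemidef ∧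
        (∀ σ ∈ F, 1 ≤ ((Y * σ).trace).re) ∧ x = ((Y * ρ).trace).re} := by
  rw [toReal_WgtS hne (fun σ hσ => (hFd σ hσ).2) hρ]
  set V := {x : ℝ | ∃ Y : Matrix (Fin d) (Fin d) ℂ, Y.PosSemidef ∧
    (∀ σ ∈ F, 1 ≤ ((Y * σ).trace).re) ∧ x = ((Y * ρ).trace).re}
  have hP1 : sInf (feasibleWeights F ρ) ≤ 1 :=
    csInf_le bddBelow_feasibleWeights (one_mem_feasibleWeights hρ.1 hne)
  have hweak : ∀ x ∈ V, 1 - sInf (feasibleWeights F ρ) ≤ x := by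
    rintro _ ⟨Y, hY, hYF, rfl⟩
    exact sub_le_comm.mp <| le_csInf ⟨1, one_mem_feasibleWeights hρ.1 hne⟩ fun μ hμ =>
      sub_le_comm.mp (one_sub_le_re_trace_mul hμ hY hYF)
  have hV : (1 : ℝ) ∈ V :=
    ⟨1, .one, fun σ hσ => by simp [(hFd σ hσ).2], by simp [hρ.2]⟩
  refine le_antisymm (le_csInf ⟨1, hV⟩ hweak) (le_of_forall_gt fun t ht => ?_)
  obtain ⟨Y, hY, hYF, hYρ⟩ := exists_posSemidef_dual_witness hcomp hconv
    (fun σ hσ => (hFd σ hσ).1.isHermitian) hρ.1 (by linarith) fun σ hσ hD =>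
      (csInf_le bddBelow_feasibleWeights (one_sub_mem_feasibleWeights hσ hρ.2 (hFd σ hσ).2
        (by linarith) hD)).not_gt (by linarith)
  exact csInf_lt_of_lt ⟨_, hweak⟩ ⟨Y, hY, hYF, rfl⟩ hYρ
end
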